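/- arXiv:1801.05749 — 2 statements merged into one kernel-verified Lean document; each statement's English description precedes it below -/
import Mathlib

section
/- Define the reversal L_m(z) = z^m·L*_m(1/z). Then the Geronimo–Case polynomials satisfy (1 − z^2)·K_{2k}(z) = L_{2k}(z) − z^2·L*_{2k}(z) for all k ≥ 0. -/
open Polynomial Finset

/-- Geronimo–Case recursion: `(GC a b m).1 = L*_m`, `(GC a b m).2 = K_m`. -/
noncomputable def GC (a b : ℕ → ℝ) : ℕ → Polynomial ℝ × Polynomial ℝ
  | 0 => (1, 1)
  | m + 1 =>
      let p := GC a b m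
      if m % 2 = 0 then
        (Polynomial.X * p.1 - Polynomial.C (b (m / 2 + 1)) * p.2, p.2)
      else
        (Polynomial.X * p.1 - Polynomial.C ((a (m / 2 + 1)) ^ 2 - 1) * p.2,
         Polynomial.X * p.1 + p.2)

/-! Strengthen the claim to an invariant of the pair `(L*_{2k}, K_{2k})` and induct on `k`,
two steps of the recursion at a time: both polynomials have degree `≤ 2k`, `K_{2k}` is
self-reciprocal, and `L_{2k} = (1 - z²) K_{2k} + z² L*_{2k}`. For `deg p ≤ N`, reversal at degree
`N + 2` sends `z² p, z p, p` to `p̃, z p̃, z² p̃` (`p̃` the reversal at degree `N`), so after two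
steps both reversal identities become ring identities in `L*_{2k}` and `K_{2k}`. -/

namespace Polynomial

variable {R : Type*}

theorem reflect_add_X_pow_mul [Semiring R] {p : R[X]} {N i j : ℕ} (hp : p.natDegree ≤ N) (hij : i ≤ j) :
    reflect (N + j) (X ^ i * p) = X ^ (j - i) * reflect N p := by
  rw [add_comm, reflect_mul _ _ (natDegree_X_pow_le i |>.trans hij) hp, reflect_monomial,
    revAt_le hij]

theorem natDegree_X_mul_le_of_le [Semiring R] {p : R[X]} {N : ℕ} (hp : p.natDegree ≤ N) :
    (X * p).natDegree ≤ N + 1 :=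
  natDegree_mul_le_of_le natDegree_X_le hp |>.trans_eq (add_comm 1 N)

theorem natDegree_X_mul_sub_C_mul_le [Ring R] {p q : R[X]} {N : ℕ} (hp : p.natDegree ≤ N)
    (hq : q.natDegree ≤ N) (c : R) : (X * p - C c * q).natDegree ≤ N + 1 :=
  natDegree_sub_le_of_le (natDegree_X_mul_le_of_le hp)
    ((natDegree_C_mul_le c q).trans (hq.trans N.le_succ)) |>.trans_eq (max_self _)

end Polynomial

variable {R : Type*} [CommRing R]

structure IsGCReflectPair (N : ℕ) (L K : R[X]) : Prop where
  natDegree_fst_le : L.natDegree ≤ N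
  natDegree_snd_le : K.natDegree ≤ N
  reflect_snd : reflect N K = K
  reflect_fst : reflect N L = (1 - X ^ 2) * K + X ^ 2 * L

namespace IsGCReflectPair

theorem one : IsGCReflectPair 0 (1 : R[X]) 1 where
  natDegree_fst_le := natDegree_one.le
  natDegree_snd_le := natDegree_one.le
  reflect_snd := by simp
  reflect_fst := by simp

variable {N : ℕ} {L K : R[X]}

theorem step (h : IsGCReflectPair N L K) (b c : R) :
    IsGCReflectPair (N + 2) (X * (X * L - C b * K) - C c * K) (X * (X * L - C b * K) + K) := by
  have hK := h.natDegree_snd_le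
  have hXL : reflect (N + 2) (X ^ 2 * L) = reflect N L := by
    simpa using reflect_add_X_pow_mul (i := 2) (j := 2) h.natDegree_fst_le le_rfl
  have hXK : reflect (N + 2) (X * K) = X * K := by
    simpa [h.reflect_snd] using reflect_add_X_pow_mul (i := 1) (j := 2) hK one_le_two
  have hK' : reflect (N + 2) K = X ^ 2 * K := by
    simpa [h.reflect_snd] using reflect_add_X_pow_mul (i := 0) (j := 2) hK zero_le_two
  have hM : (X * L - C b * K).natDegree ≤ N + 1 :=
    natDegree_X_mul_sub_C_mul_le h.natDegree_fst_le hK b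
  have hXM : X * (X * L - C b * K) = X ^ 2 * L - C b * (X * K) := by ring
  refine ⟨natDegree_X_mul_sub_C_mul_le hM (hK.trans (by omega)) c,
    natDegree_add_le_of_degree_le (natDegree_X_mul_le_of_le hM) (hK.trans (by omega)), ?_, ?_⟩
  · rw [hXM, reflect_add, reflect_sub, reflect_C_mul, hXL, hXK, hK', h.reflect_fst]
    ring
  · rw [hXM, reflect_sub, reflect_sub, reflect_C_mul, reflect_C_mul, hXL, hXK, hK',
      h.reflect_fst]
    ring

end IsGCReflectPair

theorem GC_two_mul_add_two (a b : ℕ → ℝ) (k : ℕ) :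
    GC a b (2 * k + 2) =
      (X * (X * (GC a b (2 * k)).1 - C (b (k + 1)) * (GC a b (2 * k)).2)
          - C (a (k + 1) ^ 2 - 1) * (GC a b (2 * k)).2,
        X * (X * (GC a b (2 * k)).1 - C (b (k + 1)) * (GC a b (2 * k)).2)
          + (GC a b (2 * k)).2) := by
  have hodd : (2 * k + 1) % 2 = 1 := by omega
  have hhalf : (2 * k + 1) / 2 = k := by omega
  simp [GC, hodd, hhalf]

theorem isGCReflectPair_GC (a b : ℕ → ℝ) (k : ℕ) :
    IsGCReflectPair (2 * k) (GC a b (2 * k)).1 (GC a b (2 * k)).2 := by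
  induction k with
  | zero => exact IsGCReflectPair.one
  | succ k ih =>
    rw [Nat.mul_succ, GC_two_mul_add_two]
    exact ih.step _ _

theorem geronimo_case_K_even_reversal_general (a b : ℕ → ℝ) (k : ℕ) :
    (1 - Polynomial.X ^ 2) * (GC a b (2 * k)).2 =
      Polynomial.reflect (2 * k) (GC a b (2 * k)).1
        - Polynomial.X ^ 2 * (GC a b (2 * k)).1 := by
  rw [(isGCReflectPair_GC a b k).reflect_fst]
  ring

theorem geronimo_case_K_even_reversal (a b : ℕ → ℝ) (ha : ∀ j, 0 < a j) (k : ℕ) :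
    (1 - Polynomial.X ^ 2) * (GC a b (2 * k)).2 =
      Polynomial.reflect (2 * k) (GC a b (2 * k)).1
        - Polynomial.X ^ 2 * (GC a b (2 * k)).1 :=
  geronimo_case_K_even_reversal_general a b k
end

section
/- Define the reversal L_m(z) = z^m·L*_m(1/z). Then the Geronimo–Case polynomials satisfy (1 − z^2)·K_{2k+1}(z) = L_{2k+1}(z) − z·L*_{2k+1}(z) for all k ≥ 0. -/
open Polynomial Finset

lemma GC_deg (a b : ℕ → ℝ) : ∀ m, (GC a b m).1.natDegree ≤ m ∧ (GC a b m).2.natDegree ≤ m := by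
  intro m
  induction m with
  | zero => simp [GC]
  | succ m ih =>
    obtain ⟨h1, h2⟩ := ih
    have hx1 : (X * (GC a b m).1).natDegree ≤ m + 1 := by
      refine (natDegree_mul_le).trans ?_
      rw [natDegree_X]; omega
    have hc : ∀ c : ℝ, (C c * (GC a b m).2).natDegree ≤ m + 1 := by
      intro c
      refine (natDegree_mul_le).trans ?_
      simp only [natDegree_C, zero_add]
      omega
    rw [GC]
    split_ifs with h
    · exact ⟨(natDegree_sub_le _ _).trans (max_le hx1 (hc _)), h2.trans (Nat.le_succ m)⟩
    · exact ⟨(natDegree_sub_le _ _).trans (max_le hx1 (hc _)),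
        (natDegree_add_le _ _).trans (max_le hx1 (h2.trans (Nat.le_succ m)))⟩

lemma reflect_X_mul {N : ℕ} {p : Polynomial ℝ} (h : p.natDegree ≤ N) :
    reflect (N + 1) (X * p) = reflect N p := by
  ext i
  rw [coeff_reflect, coeff_reflect]
  rcases le_or_gt i N with hi | hi
  · rw [revAt_le (by omega), revAt_le hi]
    have : N + 1 - i = (N - i) + 1 := by omega
    rw [this, coeff_X_mul]
  · rcases eq_or_lt_of_le (Nat.succ_le_of_lt hi) with hi' | hi'
    · subst hi'
      rw [show revAt (N + 1) (N + 1) = 0 by rw [revAt_le le_rfl]; omega,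
        revAt_eq_self_of_lt (show N < N + 1 by omega), mul_comm, coeff_mul_X_zero,
        coeff_eq_zero_of_natDegree_lt (show p.natDegree < N + 1 by omega)]
    · obtain ⟨j, rfl⟩ := Nat.exists_eq_succ_of_ne_zero (show i ≠ 0 by omega)
      rw [revAt_eq_self_of_lt (by omega), revAt_eq_self_of_lt hi, coeff_X_mul,
        coeff_eq_zero_of_natDegree_lt (by omega), coeff_eq_zero_of_natDegree_lt (by omega)]

lemma reflect_succ {N : ℕ} {p : Polynomial ℝ} (h : p.natDegree ≤ N) :
    reflect (N + 1) p = X * reflect N p := by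
  ext i
  cases i with
  | zero =>
    rw [coeff_reflect, revAt_le (by omega), mul_comm, coeff_mul_X_zero,
      coeff_eq_zero_of_natDegree_lt (by omega)]
  | succ j =>
    rw [coeff_reflect, coeff_X_mul, coeff_reflect]
    rcases le_or_gt j N with hj | hj
    · rw [revAt_le hj, revAt_le (by omega)]
      congr 1; omega
    · rw [revAt_eq_self_of_lt hj, revAt_eq_self_of_lt (by omega),
        coeff_eq_zero_of_natDegree_lt (by omega), coeff_eq_zero_of_natDegree_lt (by omega)]

lemma GC_key (a b : ℕ → ℝ) (k : ℕ) :
    reflect (2 * k) (GC a b (2 * k)).2 = (GC a b (2 * k)).2 ∧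
    reflect (2 * k) (GC a b (2 * k)).1 = (1 - X ^ 2) * (GC a b (2 * k)).2
      + X ^ 2 * (GC a b (2 * k)).1 := by
  induction k with
  | zero => simp [GC]
  | succ k ih =>
    obtain ⟨ihK, ihL⟩ := ih
    obtain ⟨hL, hK⟩ := GC_deg a b (2 * k)
    set L := (GC a b (2 * k)).1 with hLdef
    set K := (GC a b (2 * k)).2 with hKdef
    set b' := b (k + 1)
    set c := a (k + 1) ^ 2 - 1
    have e1 : GC a b (2 * k + 1) = (X * L - C b' * K, K) := by
      rw [GC]
      simp [Nat.mul_mod_right, Nat.mul_div_cancel_left, hLdef, hKdef, b']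
    have e2 : GC a b (2 * (k + 1)) = (X * (X * L - C b' * K) - C c * K,
        X * (X * L - C b' * K) + K) := by
      have : 2 * (k + 1) = (2 * k + 1) + 1 := by ring
      rw [this, GC, e1]
      have h1 : (2 * k + 1) % 2 = 1 := by omega
      have h2 : (2 * k + 1) / 2 = k := by omega
      simp [h1, h2, c]
    have hXL : (X * L).natDegree ≤ 2 * k + 1 := by
      refine (natDegree_mul_le).trans ?_
      rw [natDegree_X]; omega
    have hcK : ∀ d : ℝ, (C d * K).natDegree ≤ 2 * k + 1 := fun d => by
      refine (natDegree_mul_le).trans ?_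
      simp only [natDegree_C, zero_add]; omega
    have hK1 : K.natDegree ≤ 2 * k + 1 := by omega
    -- reflect computations at level 2k+2
    have r1 : reflect (2 * k + 1 + 1) (X * (X * L)) = reflect (2 * k) L := by
      rw [reflect_X_mul hXL, reflect_X_mul hL]
    have r2 : reflect (2 * k + 1 + 1) (X * (C b' * K)) = C b' * (X * reflect (2 * k) K) := by
      rw [reflect_X_mul (hcK b'), reflect_C_mul, reflect_succ hK]
    have r3 : reflect (2 * k + 1 + 1) (C c * K) = C c * (X * (X * reflect (2 * k) K)) := by
      rw [reflect_C_mul, reflect_succ hK1, reflect_succ hK]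
    have r4 : reflect (2 * k + 1 + 1) K = X * (X * reflect (2 * k) K) := by
      rw [reflect_succ hK1, reflect_succ hK]
    have h22 : 2 * (k + 1) = 2 * k + 1 + 1 := by ring
    constructor
    · rw [e2]
      simp only [h22]
      rw [mul_sub, reflect_add, reflect_sub, r1, r2, r4, ihK, ihL]
      ring
    · rw [e2]
      simp only [h22]
      rw [mul_sub, reflect_sub, reflect_sub, r1, r2, r3, ihK, ihL]
      ring

theorem geronimo_case_K_odd_reversal (a b : ℕ → ℝ) (ha : ∀ j, 0 < a j) (k : ℕ) :
    (1 - Polynomial.X ^ 2) * (GC a b (2 * k + 1)).2 =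
      Polynomial.reflect (2 * k + 1) (GC a b (2 * k + 1)).1
        - Polynomial.X * (GC a b (2 * k + 1)).1 := by
  obtain ⟨ihK, ihL⟩ := GC_key a b k
  obtain ⟨hL, hK⟩ := GC_deg a b (2 * k)
  set L := (GC a b (2 * k)).1 with hLdef
  set K := (GC a b (2 * k)).2 with hKdef
  set b' := b (k + 1)
  have e1 : GC a b (2 * k + 1) = (X * L - C b' * K, K) := by
    rw [GC]
    simp [Nat.mul_mod_right, Nat.mul_div_cancel_left, hLdef, hKdef, b']
  have hcK : (C b' * K).natDegree ≤ 2 * k := by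
    refine (natDegree_mul_le).trans ?_
    simp only [natDegree_C, zero_add]; omega
  rw [e1]
  simp only
  rw [reflect_sub, reflect_X_mul hL, reflect_succ hcK, reflect_C_mul, ihK, ihL]
  ring
end
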